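/- The graph G̅_q has exactly q(q+1)^2/2 edges, of which q(q+1) join a degree-q vertex to a degree-(q+1) vertex, and q(q^2−1)/2 join two degree-(q+1) vertices. -/

import Mathlib

open Projectivization

/-- Orthogonality of projective points: scalar product of representatives is zero. -/
def ortho {F : Type} [Field F] (P L : Projectivization F (Fin 3 → F)) : Prop :=
  dotProduct P.rep L.rep = 0

instance {F : Type} [Field F] [Finite F] :
    Finite (Projectivization F (Fin 3 → F)) := Quotient.finite _

noncomputable instance {F : Type} [Field F] [Fintype F] :
    Fintype (Projectivization F (Fin 3 → F)) := Fintype.ofFinite _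

/-- The incidence graph `G_q` of the projective plane over `F`. -/
def projGraph (F : Type) [Field F] :
    SimpleGraph (Bool × Projectivization F (Fin 3 → F)) where
  Adj v w := v.1 ≠ w.1 ∧ ortho v.2 w.2
  symm := by
    constructor
    rintro ⟨s, P⟩ ⟨t, L⟩ ⟨h1, h2⟩
    exact ⟨h1.symm, by rwa [ortho, dotProduct_comm]⟩
  loopless := by constructor; rintro ⟨s, P⟩ ⟨h, _⟩; exact h rfl

/-- The modified incidence (polarity) graph `G̅_q` of the projective plane over `F`. -/
def polarityGraph (F : Type) [Field F] :
    SimpleGraph (Projectivization F (Fin 3 → F)) where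
  Adj P L := P ≠ L ∧ ortho P L
  symm := by
    constructor
    rintro P L ⟨h1, h2⟩
    exact ⟨h1.symm, by rwa [ortho, dotProduct_comm]⟩
  loopless := by constructor; rintro P ⟨h, _⟩; exact h rfl

/-!
Write `q = |F|` and call `P` absolute when `ortho P P`. Every polar line `P^⊥` has `q + 1` points,
so an absolute point has degree `q` (the loop at `P` is not an edge) and every other point degree
`q + 1`. The isotropic cone `x² + y² + z² = 0` has `q²` vectors: in characteristic `2` it is the
plane `x + y + z = 0`, and in odd characteristic a quadratic-character sum vanishes. Hence there
are `q + 1` absolute points. Two absolute points are never adjacent, since they would span a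
totally isotropic plane of the nondegenerate form `⬝ᵥ` on `F³`. So the edges at absolute points
are exactly the `q(q + 1)` mixed edges, and the handshake lemma gives `2|E| = q(q + 1)²`.
-/

open Matrix Finset
open scoped LinearAlgebra.Projectivization

section Cone

variable {F V : Type*} [Field F] [Fintype F] [AddCommGroup V] [Module F V]

lemma card_subtype_rep_mul (Q : V → Prop)
    (hQ : ∀ (c : F) (v : V), c ≠ 0 → (Q (c • v) ↔ Q v)) :
    Nat.card {P : ℙ F V // Q P.rep} * (Fintype.card F - 1) =
      Nat.card {v : V // v ≠ 0 ∧ Q v} := by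
  classical
  have hmk : ∀ v : {v : V // v ≠ 0}, Q v ↔ Q (mk F v.1 v.2).rep := fun v => by
    obtain ⟨c, hc⟩ := exists_smul_eq_mk_rep F v.1 v.2
    rw [← hc, Units.smul_def, hQ _ _ c.ne_zero]
  calc Nat.card {P : ℙ F V // Q P.rep} * (Fintype.card F - 1)
      = Nat.card ({P : ℙ F V // Q P.rep} × Fˣ) := by
        rw [Nat.card_prod, Nat.card_eq_fintype_card (α := Fˣ), Fintype.card_units]
    _ = Nat.card {x : ℙ F V × Fˣ // Q x.1.rep} :=
        Nat.card_congr Equiv.prodSubtypeFstEquivSubtypeProd.symm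
    _ = Nat.card {v : {v : V // v ≠ 0} // Q v} :=
        Nat.card_congr ((nonZeroEquivProjectivizationProdUnits F V).subtypeEquiv hmk).symm
    _ = Nat.card {v : V // v ≠ 0 ∧ Q v} :=
        Nat.card_congr (Equiv.subtypeSubtypeEquivSubtypeInter _ Q)

lemma card_subtype_rep_eq_of_card_eq_sq [Finite V] (Q : V → Prop)
    (hQ : ∀ (c : F) (v : V), c ≠ 0 → (Q (c • v) ↔ Q v)) (hQ0 : Q 0)
    (hcard : Nat.card {v : V // Q v} = Fintype.card F ^ 2) :
    Nat.card {P : ℙ F V // Q P.rep} = Fintype.card F + 1 := by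
  classical
  have := Fintype.ofFinite V
  have hq : 1 < Fintype.card F := Fintype.one_lt_card
  have hnonzero : Nat.card {v : V // v ≠ 0 ∧ Q v} = Fintype.card F ^ 2 - 1 := by
    rw [← hcard, Nat.card_eq_fintype_card, Nat.card_eq_fintype_card, Fintype.card_subtype,
      Fintype.card_subtype, ← filter_filter, filter_ne',
      filter_erase, card_erase_of_mem (by simpa using hQ0)]
  have h := card_subtype_rep_mul Q hQ
  rw [hnonzero] at h
  refine Nat.eq_of_mul_eq_mul_right (show 0 < Fintype.card F - 1 by omega) ?_
  rw [h, ← Nat.sq_sub_sq, one_pow]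

end Cone

section DotProduct

variable {F ι : Type*} [Field F] [Fintype ι]

lemma card_dotProduct_eq_zero [Fintype F] {w : ι → F} (hw : w ≠ 0) :
    Nat.card {v : ι → F // w ⬝ᵥ v = 0} = Fintype.card F ^ (Fintype.card ι - 1) := by
  classical
  let f : (ι → F) →ₗ[F] F := dotProductBilin F F w
  have hf : f ≠ 0 := fun h => hw (by
    ext i
    simpa [f] using LinearMap.congr_fun h (Pi.single i 1))
  have hrange : Module.finrank F (LinearMap.range f) = 1 := by
    rw [LinearMap.range_eq_top.mpr (LinearMap.surjective_of_ne_zero hf), finrank_top,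
      Module.finrank_self]
  have hker := LinearMap.finrank_range_add_finrank_ker f
  rw [hrange, Module.finrank_fintype_fun_eq_card] at hker
  change Nat.card (LinearMap.ker f) = _
  rw [Module.natCard_eq_pow_finrank (K := F) (V := LinearMap.ker f), Nat.card_eq_fintype_card]
  congr 1
  omega

lemma dotProduct_self_eq_sq_sum [CharP F 2] (v : ι → F) : v ⬝ᵥ v = (∑ i, v i) ^ 2 := by
  rw [sum_pow_char]
  simp [dotProduct, sq]

end DotProduct

section QuadraticChar

variable {F : Type*} [Field F] [Fintype F] [DecidableEq F]

local notation "χ" => quadraticChar F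

lemma quadraticChar_natCard_sqrts (hF : ringChar F ≠ 2) (a : F) :
    (Nat.card {x : F // x ^ 2 = a} : ℤ) = χ a + 1 := by
  rw [← quadraticChar_card_sqrts hF a, Set.toFinset_card, Nat.card_eq_fintype_card]
  rfl

lemma sum_sq_eq_sum_quadraticChar (hF : ringChar F ≠ 2) (f : F → ℤ) :
    ∑ t : F, f (t ^ 2) = ∑ a : F, (χ a + 1) * f a := by
  rw [← sum_fiberwise_of_maps_to (g := fun t : F => t ^ 2) (fun _ _ => mem_univ _)]
  refine sum_congr rfl fun a _ => ?_
  rw [sum_congr rfl fun t ht => by rw [(mem_filter.mp ht).2], sum_const, nsmul_eq_mul,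
    ← quadraticChar_natCard_sqrts hF, Nat.card_eq_fintype_card, Fintype.card_subtype]

lemma sum_quadraticChar_add_eq_zero (hF : ringChar F ≠ 2) (b : F) : ∑ a : F, χ (a + b) = 0 :=
  (Equiv.sum_comp (Equiv.addRight b) χ).trans (quadraticChar_sum_zero hF)

lemma sum_quadraticChar_mul_mul_add_eq_zero (hF : ringChar F ≠ 2) :
    ∑ a : F, ∑ b : F, χ a * χ b * χ (a + b) = 0 := by
  obtain ⟨c, hc⟩ := FiniteField.exists_nonsquare hF
  have hc0 : c ≠ 0 := fun h => hc ⟨0, by simp [h]⟩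
  have hχc : χ c = -1 := quadraticChar_neg_one_iff_not_isSquare.mpr hc
  have hbij : Function.Bijective (c * · : F → F) := mulLeft_bijective₀ c hc0
  -- Scaling both variables by the nonsquare `c` multiplies every term by `χ(c)³ = -1`.
  have hT : ∑ a : F, ∑ b : F, χ (c * a) * χ (c * b) * χ (c * a + c * b) =
      ∑ a : F, ∑ b : F, χ a * χ b * χ (a + b) :=
    Fintype.sum_bijective _ hbij _ _ fun a => Fintype.sum_bijective _ hbij _ _ fun b => rfl
  simp only [← mul_add, map_mul, hχc, neg_mul, one_mul, mul_neg, neg_neg, sum_neg_distrib] at hT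
  linarith

lemma sum_quadraticChar_sq_add_sq_eq_zero (hF : ringChar F ≠ 2) :
    ∑ y : F, ∑ z : F, χ (y ^ 2 + z ^ 2) = 0 := by
  calc ∑ y : F, ∑ z : F, χ (y ^ 2 + z ^ 2)
      = ∑ y : F, ∑ b : F, (χ b + 1) * χ (y ^ 2 + b) :=
        sum_congr rfl fun y _ => sum_sq_eq_sum_quadraticChar hF fun b => χ (y ^ 2 + b)
    _ = ∑ b : F, χ b * ∑ y : F, χ (y ^ 2 + b) := by
        simp only [add_mul, one_mul, sum_add_distrib, add_comm (_ ^ 2),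
          sum_quadraticChar_add_eq_zero hF, add_zero, mul_sum]
        exact sum_comm
    _ = ∑ b : F, χ b * ∑ a : F, (χ a + 1) * χ (a + b) :=
        sum_congr rfl fun b _ => by rw [sum_sq_eq_sum_quadraticChar hF fun a => χ (a + b)]
    _ = ∑ b : F, ∑ a : F, χ a * χ b * χ (a + b) := by
        simp only [add_mul, one_mul, sum_add_distrib, sum_quadraticChar_add_eq_zero hF, add_zero,
          mul_sum]
        exact sum_congr rfl fun b _ => sum_congr rfl fun a _ => by ring
    _ = 0 := by rw [sum_comm]; exact sum_quadraticChar_mul_mul_add_eq_zero hF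

end QuadraticChar

section Isotropic

variable {F : Type*} [Field F] [Fintype F]

lemma card_dotProduct_self_eq_zero_of_ringChar_eq_two {ι : Type*} [Fintype ι] [Nonempty ι]
    (hF : ringChar F = 2) :
    Nat.card {v : ι → F // v ⬝ᵥ v = 0} = Fintype.card F ^ (Fintype.card ι - 1) := by
  have := ringChar.of_eq hF
  have hiso : ∀ v : ι → F, v ⬝ᵥ v = 0 ↔ 1 ⬝ᵥ v = 0 := fun v => by
    rw [dotProduct_self_eq_sq_sum, one_dotProduct, sq_eq_zero_iff]
  rw [Nat.card_congr (Equiv.subtypeEquivRight hiso)]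
  exact card_dotProduct_eq_zero one_ne_zero

lemma card_dotProduct_self_eq_zero_of_ringChar_ne_two [DecidableEq F] (hF : ringChar F ≠ 2) :
    Nat.card {v : Fin 3 → F // v ⬝ᵥ v = 0} = Fintype.card F ^ 2 := by
  have hdot : ∀ v : Fin 3 → F, v ⬝ᵥ v = v 0 ^ 2 + v 1 ^ 2 + v 2 ^ 2 := fun v => by
    simp [dotProduct, Fin.sum_univ_three, sq]
  let e : {v : Fin 3 → F // v ⬝ᵥ v = 0} ≃
      Σ yz : F × F, {x : F // x ^ 2 = -(yz.1 ^ 2 + yz.2 ^ 2)} :=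
    { toFun := fun v => ⟨(v.1 1, v.1 2), v.1 0, by linear_combination (hdot v.1).symm.trans v.2⟩
      invFun := fun s => ⟨![s.2.1, s.1.1, s.1.2], by
        rw [hdot]
        show s.2.1 ^ 2 + s.1.1 ^ 2 + s.1.2 ^ 2 = 0
        linear_combination s.2.2⟩
      left_inv := fun v => Subtype.ext (funext fun i => by fin_cases i <;> rfl)
      right_inv := fun _ => rfl }
  rw [Nat.card_congr e, Nat.card_sigma]
  zify
  simp only [quadraticChar_natCard_sqrts hF, sum_add_distrib, neg_eq_neg_one_mul (_ + _), map_mul,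
    ← mul_sum, Fintype.sum_prod_type, sum_quadraticChar_sq_add_sq_eq_zero hF]
  simp [sq]

lemma card_dotProduct_self_eq_zero :
    Nat.card {v : Fin 3 → F // v ⬝ᵥ v = 0} = Fintype.card F ^ 2 := by
  classical
  by_cases hF : ringChar F = 2
  · exact card_dotProduct_self_eq_zero_of_ringChar_eq_two hF
  · exact card_dotProduct_self_eq_zero_of_ringChar_ne_two hF

end Isotropic

lemma LinearMap.BilinForm.two_mul_finrank_le_of_le_orthogonal {K V : Type*} [Field K]
    [AddCommGroup V] [Module K V] [FiniteDimensional K V] {B : LinearMap.BilinForm K V}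
    (hB : B.Nondegenerate) {W : Submodule K V} (hW : W ≤ B.orthogonal W) :
    2 * Module.finrank K W ≤ Module.finrank K V := by
  have h := Submodule.finrank_mono hW
  rw [LinearMap.BilinForm.finrank_orthogonal hB] at h
  have := Submodule.finrank_le W
  omega

namespace SimpleGraph

variable {V : Type*} (G : SimpleGraph V) {A : V → Prop}

lemma card_sigma_neighborSet_eq_card_edges_mixed
    (hA : ∀ ⦃u v⦄, A u → A v → ¬ G.Adj u v) :
    Nat.card (Σ u : {u // A u}, G.neighborSet u) =
      Nat.card {e : Sym2 V // e ∈ G.edgeSet ∧ ∃ u v, e = s(u, v) ∧ A u ∧ ¬ A v} := by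
  let f : (Σ u : {u // A u}, G.neighborSet u) →
      {e : Sym2 V // e ∈ G.edgeSet ∧ ∃ u v, e = s(u, v) ∧ A u ∧ ¬ A v} :=
    fun x => ⟨s(x.1, x.2), x.2.2, x.1, x.2, rfl, x.1.2, fun hv => hA x.1.2 hv x.2.2⟩
  refine Nat.card_congr (Equiv.ofBijective f ⟨?_, ?_⟩)
  · rintro ⟨⟨u, hu⟩, ⟨v, huv⟩⟩ ⟨⟨u', hu'⟩, ⟨v', huv'⟩⟩ h
    rcases Sym2.eq_iff.mp (congrArg Subtype.val h) with ⟨rfl, rfl⟩ | ⟨rfl, rfl⟩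
    · rfl
    · exact absurd huv (hA hu hu')
  · rintro ⟨_, he, u, v, rfl, hu, -⟩
    exact ⟨⟨⟨u, hu⟩, ⟨v, he⟩⟩, rfl⟩

lemma card_edges_mixed_add_card_edges_outside [Finite V]
    (hA : ∀ ⦃u v⦄, A u → A v → ¬ G.Adj u v) :
    Nat.card {e : Sym2 V // e ∈ G.edgeSet ∧ ∃ u v, e = s(u, v) ∧ A u ∧ ¬ A v} +
      Nat.card {e : Sym2 V // e ∈ G.edgeSet ∧ ∃ u v, e = s(u, v) ∧ ¬ A u ∧ ¬ A v} =
      Nat.card G.edgeSet := by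
  set mixed := {e : Sym2 V | ∃ u v, e = s(u, v) ∧ A u ∧ ¬ A v}
  have houtside : ∀ e ∈ G.edgeSet,
      (∃ u v, e = s(u, v) ∧ ¬ A u ∧ ¬ A v) ↔ e ∉ mixed := by
    intro e he
    induction e using Sym2.ind with | h a b => ?_
    constructor
    · rintro ⟨u, v, huv, hu, hv⟩ ⟨u', v', huv', hu', -⟩
      have : u' ∈ s(u, v) := huv ▸ huv' ▸ Sym2.mem_mk_left u' v'
      rcases Sym2.mem_iff.mp this with rfl | rfl <;> contradiction
    · intro hmixed
      by_cases ha : A a <;> by_cases hb : A b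
      · exact absurd he (hA ha hb)
      · exact absurd ⟨a, b, rfl, ha, hb⟩ hmixed
      · exact absurd ⟨b, a, Sym2.eq_swap, hb, ha⟩ hmixed
      · exact ⟨a, b, rfl, ha, hb⟩
  rw [Nat.card_congr (Equiv.subtypeEquivRight fun e =>
    and_congr_right fun he => houtside e he)]
  exact Set.ncard_inter_add_ncard_sdiff_eq_ncard G.edgeSet mixed (Set.toFinite _)

end SimpleGraph

section Polarity

variable {F : Type} [Field F]

lemma eq_of_ortho_self_of_ortho {P L : ℙ F (Fin 3 → F)} (hP : ortho P P) (hL : ortho L L)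
    (hPL : ortho P L) : P = L := by
  by_contra hne
  have hind : LinearIndependent F ![P.rep, L.rep] := by
    have hrep : Projectivization.rep ∘ ![P, L] = ![P.rep, L.rep] := by
      ext i : 1
      fin_cases i <;> rfl
    have := (independent_pair_iff_ne P L).mpr hne
    rwa [independent_iff, hrep] at this
  let B := Matrix.toBilin' (1 : Matrix (Fin 3) (Fin 3) F)
  have hB : ∀ v w, B v w = v ⬝ᵥ w := fun v w => by simp [B, toBilin'_apply', one_mulVec]
  have hortho : ∀ i j, B (![P.rep, L.rep] i) (![P.rep, L.rep] j) = 0 := by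
    intro i j
    rw [hB]
    fin_cases i <;> fin_cases j
    exacts [hP, hPL, dotProduct_comm P.rep L.rep ▸ hPL, hL]
  let W := Submodule.span F (Set.range ![P.rep, L.rep])
  have hW : W ≤ B.orthogonal W := Submodule.span_le.mpr <| by
    rintro _ ⟨j, rfl⟩ n hn
    have : W ≤ LinearMap.ker (B.flip (![P.rep, L.rep] j)) :=
      Submodule.span_le.mpr <| by rintro _ ⟨i, rfl⟩; exact hortho i j
    exact this hn
  have h := LinearMap.BilinForm.two_mul_finrank_le_of_le_orthogonal
    (LinearMap.BilinForm.nondegenerate_toBilin'_of_det_ne_zero' 1 (by simp)) hW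
  rw [finrank_span_eq_card hind, Module.finrank_fin_fun] at h
  simp at h

lemma not_adj_polarityGraph_of_ortho_self ⦃P L : ℙ F (Fin 3 → F)⦄ (hP : ortho P P)
    (hL : ortho L L) : ¬ (polarityGraph F).Adj P L :=
  fun hPL => hPL.1 (eq_of_ortho_self_of_ortho hP hL hPL.2)

lemma neighborSet_polarityGraph (P : ℙ F (Fin 3 → F)) :
    (polarityGraph F).neighborSet P = {L | ortho P L} \ {P} := by
  ext L
  simp [polarityGraph, and_comm, eq_comm]

variable [Fintype F]

lemma card_ortho (P : ℙ F (Fin 3 → F)) : Nat.card {L // ortho P L} = Fintype.card F + 1 :=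
  card_subtype_rep_eq_of_card_eq_sq (fun v => P.rep ⬝ᵥ v = 0)
    (fun c v hc => by simp [dotProduct_smul, hc]) (dotProduct_zero _)
    (by rw [card_dotProduct_eq_zero P.rep_nonzero, Fintype.card_fin])

lemma card_ortho_self : Nat.card {P : ℙ F (Fin 3 → F) // ortho P P} = Fintype.card F + 1 :=
  card_subtype_rep_eq_of_card_eq_sq (fun v => v ⬝ᵥ v = 0)
    (fun c v hc => by simp [dotProduct_smul, smul_dotProduct, hc]) (dotProduct_zero _)
    card_dotProduct_self_eq_zero

lemma card_projectivization :
    Nat.card (ℙ F (Fin 3 → F)) = Fintype.card F ^ 2 + Fintype.card F + 1 := by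
  rw [card_of_finrank F _ (Module.finrank_fin_fun F), Nat.card_eq_fintype_card]
  simp only [sum_range_succ, sum_range_zero]
  ring

lemma card_neighborSet_polarityGraph_of_ortho_self {P : ℙ F (Fin 3 → F)} (hP : ortho P P) :
    Nat.card ((polarityGraph F).neighborSet P) = Fintype.card F := by
  rw [neighborSet_polarityGraph, Nat.card_coe_set_eq,
    Set.ncard_sdiff_singleton_of_mem (s := {L | ortho P L}) hP, ← Nat.card_coe_set_eq]
  exact congrArg (· - 1) (card_ortho P)

lemma card_neighborSet_polarityGraph_of_not_ortho_self {P : ℙ F (Fin 3 → F)}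
    (hP : ¬ ortho P P) :
    Nat.card ((polarityGraph F).neighborSet P) = Fintype.card F + 1 := by
  rw [neighborSet_polarityGraph, Set.sdiff_singleton_eq_self (s := {L | ortho P L}) hP]
  exact card_ortho P

lemma card_neighborSet_polarityGraph_eq_iff (P : ℙ F (Fin 3 → F)) :
    Nat.card ((polarityGraph F).neighborSet P) = Fintype.card F ↔ ortho P P := by
  by_cases hP : ortho P P
  · simp [card_neighborSet_polarityGraph_of_ortho_self hP, hP]
  · simp [card_neighborSet_polarityGraph_of_not_ortho_self hP, hP]

lemma card_neighborSet_polarityGraph_eq_add_one_iff (P : ℙ F (Fin 3 → F)) :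
    Nat.card ((polarityGraph F).neighborSet P) = Fintype.card F + 1 ↔ ¬ ortho P P := by
  by_cases hP : ortho P P
  · simp [card_neighborSet_polarityGraph_of_ortho_self hP, hP]
  · simp [card_neighborSet_polarityGraph_of_not_ortho_self hP, hP]

lemma two_mul_card_edgeSet_polarityGraph :
    2 * Nat.card (polarityGraph F).edgeSet = Fintype.card F * (Fintype.card F + 1) ^ 2 := by
  classical
  have habs : #{P : ℙ F (Fin 3 → F) | ortho P P} = Fintype.card F + 1 := by
    rw [← card_ortho_self, Nat.card_eq_fintype_card, Fintype.card_subtype]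
  have hnonabs : #{P : ℙ F (Fin 3 → F) | ¬ ortho P P} = Fintype.card F ^ 2 := by
    have := card_filter_add_card_filter_not (s := univ) fun P : ℙ F (Fin 3 → F) => ortho P P
    rw [card_univ, ← Nat.card_eq_fintype_card, card_projectivization, habs] at this
    omega
  rw [Nat.card_eq_fintype_card, ← SimpleGraph.edgeFinset_card,
    ← SimpleGraph.sum_degrees_eq_twice_card_edges, ← sum_filter_add_sum_filter_not univ
      fun P => ortho P P]
  simp only [← SimpleGraph.card_neighborSet_eq_degree, ← Nat.card_eq_fintype_card]
  rw [Nat.card_eq_fintype_card (α := F),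
    sum_congr rfl fun P hP => card_neighborSet_polarityGraph_of_ortho_self (mem_filter.1 hP).2,
    sum_congr rfl fun P hP => card_neighborSet_polarityGraph_of_not_ortho_self (mem_filter.1 hP).2,
    sum_const, sum_const, habs, hnonabs, smul_eq_mul, smul_eq_mul]
  ring

end Polarity

theorem polarityGraph_edge_counts_general (q : ℕ)
    (F : Type) [Field F] [Fintype F] (hF : Fintype.card F = q) :
    Nat.card ((polarityGraph F).edgeSet) = q * (q + 1) ^ 2 / 2 ∧
    Nat.card {e : Sym2 (Projectivization F (Fin 3 → F)) //
      e ∈ (polarityGraph F).edgeSet ∧ ∃ u v, e = s(u, v) ∧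
        Nat.card ((polarityGraph F).neighborSet u) = q ∧
        Nat.card ((polarityGraph F).neighborSet v) = q + 1} = q * (q + 1) ∧
    Nat.card {e : Sym2 (Projectivization F (Fin 3 → F)) //
      e ∈ (polarityGraph F).edgeSet ∧ ∃ u v, e = s(u, v) ∧
        Nat.card ((polarityGraph F).neighborSet u) = q + 1 ∧
        Nat.card ((polarityGraph F).neighborSet v) = q + 1} = q * (q ^ 2 - 1) / 2 := by
  classical
  subst hF
  simp only [card_neighborSet_polarityGraph_eq_iff, card_neighborSet_polarityGraph_eq_add_one_iff]
  have hedges := two_mul_card_edgeSet_polarityGraph (F := F)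
  have hmixed := (polarityGraph F).card_sigma_neighborSet_eq_card_edges_mixed
    not_adj_polarityGraph_of_ortho_self
  rw [Nat.card_sigma,
    sum_congr rfl fun P _ => card_neighborSet_polarityGraph_of_ortho_self P.2, sum_const,
    card_univ, ← Nat.card_eq_fintype_card, card_ortho_self, smul_eq_mul] at hmixed
  have hsplit := (polarityGraph F).card_edges_mixed_add_card_edges_outside
    not_adj_polarityGraph_of_ortho_self
  generalize Fintype.card F = q at hedges hmixed ⊢
  have hq : q * (q ^ 2 - 1) + 2 * ((q + 1) * q) = q * (q + 1) ^ 2 := by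
    rcases q with _ | r
    · rfl
    · rw [show (r + 1) ^ 2 - 1 = r * (r + 2) by rw [Nat.sub_eq_of_eq_add]; ring]
      ring
  refine ⟨by omega, by linarith, by omega⟩

/-- `G̅_q` has exactly `q(q+1)^2/2` edges: `q(q+1)` of them join a degree-`q` vertex to a
degree-`(q+1)` vertex, and `q(q^2-1)/2` join two degree-`(q+1)` vertices. -/
theorem polarityGraph_edge_counts (q : ℕ) (hq : IsPrimePow q)
    (F : Type) [Field F] [Fintype F] (hF : Fintype.card F = q) :
    Nat.card ((polarityGraph F).edgeSet) = q * (q + 1) ^ 2 / 2 ∧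
    Nat.card {e : Sym2 (Projectivization F (Fin 3 → F)) //
      e ∈ (polarityGraph F).edgeSet ∧ ∃ u v, e = s(u, v) ∧
        Nat.card ((polarityGraph F).neighborSet u) = q ∧
        Nat.card ((polarityGraph F).neighborSet v) = q + 1} = q * (q + 1) ∧
    Nat.card {e : Sym2 (Projectivization F (Fin 3 → F)) //
      e ∈ (polarityGraph F).edgeSet ∧ ∃ u v, e = s(u, v) ∧
        Nat.card ((polarityGraph F).neighborSet u) = q + 1 ∧
        Nat.card ((polarityGraph F).neighborSet v) = q + 1} = q * (q ^ 2 - 1) / 2 :=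
  polarityGraph_edge_counts_general q F hF
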